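/- Let F be the free join-semilattice on three generators x, y, z, realized as the set of nonempty subsets of {x,y,z} under union, with generators the singletons. Let E ⊆ F × F be the subsemilattice of F × F (under componentwise union) generated by the six pairs ({x},{x}), ({x},{y}), ({y},{y}), ({y},{z}), ({z},{z}), ({z},{x}). Then in the digraph (F, E) there is no symmetric path from {x} to {z}, i.e., no sequence {x} = a₀, a₁, …, a_m = {z} with (aᵢ, aᵢ₊₁) ∈ E and (aᵢ₊₁, aᵢ) ∈ E for all i. -/

import Mathlib

/-
An edge `(A, B)` of `E` is a join of edges of the reflexive 3-cycle `i → i`, `i → i + 1`, so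
every element of `B` has a cycle-predecessor in `A` and every element of `A` has a
cycle-successor in `B`; this property is preserved by componentwise union. If `A = {x}` and
both `(A, B)` and `(B, A)` are edges, every element of `B` is then both `x` or `y` and `x` or `z`,
so `B = {x}`: a symmetric path can never leave `{x}`.
-/

namespace DigraphHM14

/-- The free join-semilattice on the three generators `x = 0`, `y = 1`, `z = 2`,
realized as the nonempty subsets of `{0,1,2}` under union. -/
def F3 : Type := { s : Finset (Fin 3) // s.Nonempty }

/-- The join (componentwise union is built from this) of `F3`. -/
def fjoin (a b : F3) : F3 :=
  ⟨a.1 ∪ b.1, a.2.mono (Finset.subset_union_left)⟩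

/-- The generator `{x}`. -/
def genX : F3 := ⟨{0}, Finset.singleton_nonempty 0⟩

/-- The generator `{y}`. -/
def genY : F3 := ⟨{1}, Finset.singleton_nonempty 1⟩

/-- The generator `{z}`. -/
def genZ : F3 := ⟨{2}, Finset.singleton_nonempty 2⟩

/-- The subsemilattice `E` of `F3 × F3` (under componentwise union) generated by the six
pairs `({x},{x})`, `({x},{y})`, `({y},{y})`, `({y},{z})`, `({z},{z})`, `({z},{x})`,
viewed as the edge relation of a digraph on `F3`. -/
inductive SemEdge : F3 → F3 → Prop
  | xx : SemEdge genX genX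
  | xy : SemEdge genX genY
  | yy : SemEdge genY genY
  | yz : SemEdge genY genZ
  | zz : SemEdge genZ genZ
  | zx : SemEdge genZ genX
  | join {a b c d : F3} : SemEdge a b → SemEdge c d → SemEdge (fjoin a c) (fjoin b d)

section Supported

variable {α : Type*} {R : α → α → Prop}

def Supported (R : α → α → Prop) (A B : Finset α) : Prop :=
  (∀ j ∈ B, ∃ i ∈ A, R i j) ∧ ∀ i ∈ A, ∃ j ∈ B, R i j

theorem Supported.singleton {i j : α} (h : R i j) : Supported R {i} {j} := by
  simp [Supported, h]

theorem Supported.union [DecidableEq α] {A B C D : Finset α} (hAB : Supported R A B)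
    (hCD : Supported R C D) : Supported R (A ∪ C) (B ∪ D) := by
  constructor
  · simp only [Finset.mem_union]
    rintro j (hj | hj)
    · obtain ⟨i, hi, hij⟩ := hAB.1 j hj
      exact ⟨i, Or.inl hi, hij⟩
    · obtain ⟨i, hi, hij⟩ := hCD.1 j hj
      exact ⟨i, Or.inr hi, hij⟩
  · simp only [Finset.mem_union]
    rintro i (hi | hi)
    · obtain ⟨j, hj, hij⟩ := hAB.2 i hi
      exact ⟨j, Or.inl hj, hij⟩
    · obtain ⟨j, hj, hij⟩ := hCD.2 i hi
      exact ⟨j, Or.inr hj, hij⟩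

end Supported

abbrev CycleAdj (i j : Fin 3) : Prop := j = i ∨ j = i + 1

theorem SemEdge.supported {a b : F3} (h : SemEdge a b) : Supported CycleAdj a.1 b.1 := by
  induction h with
  | join _ _ ihab ihcd => exact ihab.union ihcd
  | _ => exact Supported.singleton (by decide)

theorem eq_genX_of_semEdge_of_semEdge {b : F3} (hxb : SemEdge genX b) (hbx : SemEdge b genX) :
    b = genX := by
  have hmem : ∀ j ∈ b.1, j = 0 := by
    intro j hj
    obtain ⟨i, hi, hij⟩ := hxb.supported.1 j hj
    obtain ⟨k, hk, hjk⟩ := hbx.supported.2 j hj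
    rw [genX, Finset.mem_singleton] at hi hk
    subst hi hk
    revert hij hjk
    fin_cases j <;> decide
  exact Subtype.ext (Finset.eq_singleton_iff_nonempty_unique_mem.mpr ⟨b.2, hmem⟩)

/-- In the digraph `(F3, SemEdge)` — the digraph freely generated by the reflexive
3-cycle on `{x, y, z}` in the variety of semilattices — there is no symmetric path
from `{x}` to `{z}`. -/
theorem no_symmetric_path_genX_genZ :
    ¬ Relation.ReflTransGen (fun u v : F3 => SemEdge u v ∧ SemEdge v u) genX genZ := by
  suffices h : ∀ v, Relation.ReflTransGen (fun u v : F3 => SemEdge u v ∧ SemEdge v u) genX v →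
      v = genX by
    intro hpath
    exact absurd (congrArg Subtype.val (h genZ hpath)) (by decide)
  intro v hv
  induction hv with
  | refl => rfl
  | tail _ hstep ih =>
    subst ih
    exact eq_genX_of_semEdge_of_semEdge hstep.1 hstep.2

end DigraphHM14
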